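/- For each ε > 0, classical solutions of the discounted MFG system are unique: if (u₁, m₁) and (u₂, m₂) are classical solutions of the discounted MFG system for the same ε > 0, then u₁ = u₂ and m₁ = m₂ on T^d. (No assumptions beyond the standing hypotheses on g and V are needed; one uses that m > 0 for any classical solution and the integral identity ∫_{T^d} (m₁ − m₂)(g(m₁) − g(m₂)) + (1/2)(m₁ + m₂)|Du₁ − Du₂|² dx = 0.) -/

import Mathlib

/-!
Lasry–Lions: test the difference of the Hamilton–Jacobi equations against `m₁ - m₂`, that of the
Fokker–Planck equations against `u₁ - u₂`, and add. The discount terms cancel, and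
`(m₁ - m₂)(g(m₁) - g(m₂)) + ½ (m₁ + m₂) |Du₁ - Du₂|²` is the divergence of a periodic field, so
its integral over the torus vanishes. It is pointwise nonnegative since `g` is increasing and
`m₁, m₂ ≥ 0`, hence by continuity it vanishes identically, and strict monotonicity of `g` gives
`m₁ = m₂`. Then at a maximum point of `u₁ - u₂` the gradients agree and the Hamilton–Jacobi
equations leave `ε (u₁ - u₂) = 0`, so `u₁ ≤ u₂`, and symmetrically.
-/

open MeasureTheory Set

noncomputable def pd (d : ℕ) (i : Fin d) (f : (Fin d → ℝ) → ℝ) : (Fin d → ℝ) → ℝ :=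
  fun x => fderiv ℝ f x (Pi.single i 1)

noncomputable def gradSq (d : ℕ) (u : (Fin d → ℝ) → ℝ) (x : Fin d → ℝ) : ℝ :=
  ∑ i, pd d i u x ^ 2

noncomputable def divUp (d : ℕ) (m u : (Fin d → ℝ) → ℝ) (x : Fin d → ℝ) : ℝ :=
  ∑ i, pd d i (fun y => m y * pd d i u y) x

/-- `f` is `ℤ^d`-periodic, i.e. a function on the flat torus `T^d`. -/
def ZPer (d : ℕ) (f : (Fin d → ℝ) → ℝ) : Prop :=
  ∀ (x : Fin d → ℝ) (k : Fin d → ℤ), f (x + fun i => (k i : ℝ)) = f x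

/-- `f` has finite `α`-Hölder seminorm. -/
def HolderSemi (α : ℝ) {E : Type*} [PseudoMetricSpace E] (f : E → ℝ) : Prop :=
  ∃ C : ℝ, 0 ≤ C ∧ ∀ x y, |f x - f y| ≤ C * dist x y ^ α

/-- `f` is of class `C^{1,α}`. -/
def C1Hold (d : ℕ) (α : ℝ) (f : (Fin d → ℝ) → ℝ) : Prop :=
  ContDiff ℝ 1 f ∧ ∀ i, HolderSemi α (pd d i f)

/-- `f` is of class `C^{2,α}`. -/
def C2Hold (d : ℕ) (α : ℝ) (f : (Fin d → ℝ) → ℝ) : Prop :=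
  ContDiff ℝ 2 f ∧ ∀ i j, HolderSemi α (pd d i (pd d j f))

/-- `f` is locally `α`-Hölder on `s`. -/
def LocHolderOn (α : ℝ) (f : ℝ → ℝ) (s : Set ℝ) : Prop :=
  ∀ K : Set ℝ, IsCompact K → K ⊆ s →
    ∃ C : ℝ, 0 ≤ C ∧ ∀ x ∈ K, ∀ y ∈ K, |f x - f y| ≤ C * dist x y ^ α

/-- Standing hypotheses on `g`: strictly increasing and continuous on `[0,∞)`,
of class `C^{1,α}` on `(0,∞)`. -/
def Ghyp (α : ℝ) (g : ℝ → ℝ) : Prop :=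
  StrictMonoOn g (Ici 0) ∧ ContinuousOn g (Ici 0) ∧
    DifferentiableOn ℝ g (Ioi 0) ∧ LocHolderOn α (deriv g) (Ioi 0)

/-- Standing hypotheses on `V`: a `C^{1,α}` function on the torus. -/
def Vhyp (d : ℕ) (α : ℝ) (V : (Fin d → ℝ) → ℝ) : Prop :=
  ZPer d V ∧ C1Hold d α V

/-- The oscillation of `V` over the torus. -/
noncomputable def oscV (d : ℕ) (V : (Fin d → ℝ) → ℝ) : ℝ :=
  sSup (V '' Icc (0 : Fin d → ℝ) 1) - sInf (V '' Icc (0 : Fin d → ℝ) 1)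

/-- Assumption (A1): `g⁻¹(g(1) − osc V) > 0`, i.e. `g(1) − osc V` is attained by `g` on `(0,∞)`. -/
def A1 (d : ℕ) (g : ℝ → ℝ) (V : (Fin d → ℝ) → ℝ) : Prop :=
  g 1 - oscV d V ∈ g '' Ioi (0 : ℝ)

/-- Assumption (A2). -/
def A2 (g : ℝ → ℝ) : Prop :=
  ∃ C₁ C₂ β : ℝ, 0 < C₁ ∧ 0 < C₂ ∧
    (∀ z : ℝ, 0 < z → C₁ * z ^ β ≤ deriv g z) ∧
    (∀ z : ℝ, 0 ≤ z → g z ≤ C₂ + z * g z)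

/-- A classical solution `(u, m)` of the discounted MFG system
`ε u + |Du|²/2 + V = g(m)`, `ε m − div(m Du) = ε` on `T^d`. -/
structure DiscSol (d : ℕ) (α : ℝ) (g : ℝ → ℝ) (V : (Fin d → ℝ) → ℝ) (ε : ℝ)
    (u m : (Fin d → ℝ) → ℝ) : Prop where
  per_u : ZPer d u
  per_m : ZPer d m
  reg_u : C2Hold d α u
  reg_m : C1Hold d α m
  m_nonneg : ∀ x, 0 ≤ m x
  hj : ∀ x, ε * u x + (1 / 2) * gradSq d u x + V x = g (m x)
  fp : ∀ x, ε * m x - divUp d m u x = ε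

/-- A classical solution `(u, m, H̄)` of the ergodic MFG system
`|Du|²/2 + V = g(m) + H̄`, `−div(m Du) = 0`, `m ≥ 0`, `∫ m = 1` on `T^d`. -/
structure ErgSol (d : ℕ) (α : ℝ) (g : ℝ → ℝ) (V : (Fin d → ℝ) → ℝ)
    (u m : (Fin d → ℝ) → ℝ) (H : ℝ) : Prop where
  per_u : ZPer d u
  per_m : ZPer d m
  reg_u : C2Hold d α u
  reg_m : C1Hold d α m
  m_nonneg : ∀ x, 0 ≤ m x
  m_mass : (∫ x in Icc (0 : Fin d → ℝ) 1, m x) = 1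
  hj : ∀ x, (1 / 2) * gradSq d u x + V x = g (m x) + H
  fp : ∀ x, divUp d m u x = 0

section PartialDerivatives

variable {d : ℕ} {f g : (Fin d → ℝ) → ℝ} {x : Fin d → ℝ}

lemma pd_sub (hf : DifferentiableAt ℝ f x) (hg : DifferentiableAt ℝ g x) (i : Fin d) :
    pd d i (fun y => f y - g y) x = pd d i f x - pd d i g x := by
  simp [pd, fderiv_fun_sub hf hg]

lemma pd_mul (hf : DifferentiableAt ℝ f x) (hg : DifferentiableAt ℝ g x) (i : Fin d) :
    pd d i (fun y => f y * g y) x = pd d i f x * g x + f x * pd d i g x := by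
  simp [pd, fderiv_fun_mul hf hg]
  ring

lemma contDiff_pd {n : ℕ} (hf : ContDiff ℝ (n + 1) f) (i : Fin d) : ContDiff ℝ n (pd d i f) :=
  (hf.fderiv_right (m := n) le_rfl).clm_apply contDiff_const

lemma continuous_pd (hf : ContDiff ℝ 1 f) (i : Fin d) : Continuous (pd d i f) :=
  (contDiff_pd (n := 0) (by simpa using hf) i).continuous

end PartialDerivatives

lemma Fin.insertNth_one_eq_insertNth_zero_add_single {n : ℕ} (i : Fin (n + 1)) (x : Fin n → ℝ) :
    Fin.insertNth (α := fun _ => ℝ) i 1 x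
      = Fin.insertNth (α := fun _ => ℝ) i 0 x + Pi.single i 1 := by
  ext j
  rcases eq_or_ne j i with rfl | hj
  · simp
  · obtain ⟨j, rfl⟩ := Fin.exists_succAbove_eq hj
    simp [hj]

lemma Icc_zero_one_subset_closure_interior (d : ℕ) :
    Icc (0 : Fin d → ℝ) 1 ⊆ closure (interior (Icc 0 1)) := by
  rw [← pi_univ_Icc, interior_pi_set finite_univ, closure_pi_set]
  exact pi_mono fun _ _ => (closure_interior_Icc zero_ne_one).symm.subset

namespace ZPer

variable {d : ℕ} {f : (Fin d → ℝ) → ℝ}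

lemma pd (hf : ZPer d f) (i : Fin d) : ZPer d (_root_.pd d i f) := by
  intro x k
  simp only [_root_.pd, ← fderiv_comp_add_right, hf _ k]

lemma add_single (hf : ZPer d f) (x : Fin d → ℝ) (i : Fin d) : f (x + Pi.single i 1) = f x := by
  convert hf x (Pi.single i 1) using 3
  ext j
  simp [Pi.single_apply]

lemma exists_mem_Icc_eq (hf : ZPer d f) (x : Fin d → ℝ) : ∃ y ∈ Icc 0 1, f x = f y := by
  refine ⟨fun i => Int.fract (x i),
    ⟨fun i => Int.fract_nonneg _, fun i => (Int.fract_lt_one _).le⟩, ?_⟩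
  rw [← hf (fun i => Int.fract (x i)) fun i => ⌊x i⌋]
  congr 1
  funext i
  exact (Int.fract_add_floor (x i)).symm

lemma exists_forall_le (hf : ZPer d f) (hc : Continuous f) : ∃ x₀, ∀ x, f x ≤ f x₀ := by
  obtain ⟨x₀, -, hx₀⟩ := isCompact_Icc.exists_isMaxOn
    (nonempty_Icc.mpr (zero_le_one : (0 : Fin d → ℝ) ≤ 1)) hc.continuousOn
  refine ⟨x₀, fun x => ?_⟩
  obtain ⟨y, hy, hxy⟩ := hf.exists_mem_Icc_eq x
  exact hxy ▸ hx₀ hy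

lemma eq_zero_of_integral_eq_zero (hf : ZPer d f) (hc : Continuous f) (hnn : 0 ≤ f)
    (hint : ∫ x in Icc 0 1, f x = 0) : f = 0 := by
  have hae : f =ᵐ[volume.restrict (Icc 0 1)] 0 :=
    (setIntegral_eq_zero_iff_of_nonneg_ae (.of_forall hnn) hc.integrableOn_Icc).mp hint
  have hIcc : EqOn f 0 (Icc 0 1) :=
    Measure.eqOn_of_ae_eq hae hc.continuousOn continuousOn_const
      (Icc_zero_one_subset_closure_interior d)
  funext x
  obtain ⟨y, hy, hxy⟩ := hf.exists_mem_Icc_eq x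
  exact hxy ▸ hIcc hy

/-- Divergence theorem: the fluxes through opposite faces of the unit cube cancel by periodicity. -/
lemma integral_pd_eq_zero (hf : ZPer d f) (hc : ContDiff ℝ 1 f) (i : Fin d) :
    ∫ x in Icc 0 1, _root_.pd d i f x = 0 := by
  obtain ⟨n, rfl⟩ : ∃ n, d = n + 1 := Nat.exists_eq_succ_of_ne_zero i.pos.ne'
  have hsum : ∀ x, ∑ j, (Pi.single i (fderiv ℝ f) : Fin (n + 1) → _) j x (Pi.single j 1)
      = _root_.pd (n + 1) i f x := by
    intro x
    rw [Finset.sum_eq_single i (fun j _ hj => by simp [hj]) (by simp)]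
    simp [_root_.pd]
  have hdiv := integral_divergence_of_hasFDerivAt_off_countable' 0 1 (fun _ => zero_le_one)
    (Pi.single i f) (Pi.single i (fderiv ℝ f)) ∅ countable_empty ?_ ?_ ?_
  · simp_rw [hsum] at hdiv
    rw [hdiv]
    refine Finset.sum_eq_zero fun j _ => ?_
    rcases eq_or_ne j i with rfl | hj
    · simp [Fin.insertNth_one_eq_insertNth_zero_add_single, hf.add_single]
    · simp [hj]
  · intro j
    rcases eq_or_ne j i with rfl | hj
    · simpa using hc.continuous.continuousOn
    · rw [Pi.single_eq_of_ne hj]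
      exact continuousOn_const
  · intro x _ j
    rcases eq_or_ne j i with rfl | hj
    · simpa using (hc.differentiable one_ne_zero x).hasFDerivAt
    · rw [Pi.single_eq_of_ne hj, Pi.single_eq_of_ne hj]
      exact hasFDerivAt_const 0 x
  · simp_rw [hsum]
    exact (continuous_pd hc i).integrableOn_Icc

end ZPer

lemma MonotoneOn.sub_mul_sub_nonneg {s : Set ℝ} {g : ℝ → ℝ} (hg : MonotoneOn g s) {a b : ℝ}
    (ha : a ∈ s) (hb : b ∈ s) : 0 ≤ (a - b) * (g a - g b) := by
  rcases le_total a b with hab | hab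
  · exact mul_nonneg_of_nonpos_of_nonpos (sub_nonpos.2 hab) (sub_nonpos.2 (hg ha hb hab))
  · exact mul_nonneg (sub_nonneg.2 hab) (sub_nonneg.2 (hg hb ha hab))

lemma StrictMonoOn.eq_of_sub_mul_sub_eq_zero {s : Set ℝ} {g : ℝ → ℝ} (hg : StrictMonoOn g s)
    {a b : ℝ} (ha : a ∈ s) (hb : b ∈ s) (h : (a - b) * (g a - g b) = 0) : a = b := by
  rcases mul_eq_zero.1 h with h | h
  · exact sub_eq_zero.1 h
  · exact hg.injOn ha hb (sub_eq_zero.1 h)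

noncomputable def lasryLionsIntegrand (d : ℕ) (g : ℝ → ℝ) (u₁ m₁ u₂ m₂ : (Fin d → ℝ) → ℝ)
    (x : Fin d → ℝ) : ℝ :=
  (m₁ x - m₂ x) * (g (m₁ x) - g (m₂ x))
    + (1 / 2) * (m₁ x + m₂ x) * ∑ i, (pd d i u₁ x - pd d i u₂ x) ^ 2

lemma sub_mul_sub_le_lasryLionsIntegrand {d : ℕ} {g : ℝ → ℝ}
    {u₁ m₁ u₂ m₂ : (Fin d → ℝ) → ℝ} {x : Fin d → ℝ} (hm₁ : 0 ≤ m₁ x) (hm₂ : 0 ≤ m₂ x) :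
    (m₁ x - m₂ x) * (g (m₁ x) - g (m₂ x)) ≤ lasryLionsIntegrand d g u₁ m₁ u₂ m₂ x :=
  le_add_of_nonneg_right (mul_nonneg (mul_nonneg one_half_pos.le (add_nonneg hm₁ hm₂))
    (Finset.sum_nonneg fun _ _ => sq_nonneg _))

namespace DiscSol

variable {d : ℕ} {α ε : ℝ} {g : ℝ → ℝ} {V u₁ m₁ u₂ m₂ : (Fin d → ℝ) → ℝ}

lemma lasryLionsIntegrand_eq_sum_pd (h1 : DiscSol d α g V ε u₁ m₁)
    (h2 : DiscSol d α g V ε u₂ m₂) (x : Fin d → ℝ) :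
    lasryLionsIntegrand d g u₁ m₁ u₂ m₂ x
      = ∑ i, pd d i (fun y => (u₁ y - u₂ y) * (m₁ y * pd d i u₁ y - m₂ y * pd d i u₂ y)) x := by
  have du₁ := h1.reg_u.1.differentiable two_ne_zero
  have du₂ := h2.reg_u.1.differentiable two_ne_zero
  have dm₁ := h1.reg_m.1.differentiable one_ne_zero
  have dm₂ := h2.reg_m.1.differentiable one_ne_zero
  have dpu₁ i := ((contDiff_pd (n := 1) h1.reg_u.1 i).differentiable one_ne_zero)
  have dpu₂ i := ((contDiff_pd (n := 1) h2.reg_u.1 i).differentiable one_ne_zero)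
  have hprod : ∀ i, pd d i (fun y => (u₁ y - u₂ y) * (m₁ y * pd d i u₁ y - m₂ y * pd d i u₂ y)) x
      = (pd d i u₁ x - pd d i u₂ x) * (m₁ x * pd d i u₁ x - m₂ x * pd d i u₂ x)
        + (u₁ x - u₂ x) * (pd d i (fun y => m₁ y * pd d i u₁ y) x
            - pd d i (fun y => m₂ y * pd d i u₂ y) x) := fun i => by
    rw [pd_mul ((du₁ x).fun_sub (du₂ x))
        (((dm₁ x).fun_mul (dpu₁ i x)).fun_sub ((dm₂ x).fun_mul (dpu₂ i x))),
      pd_sub (du₁ x) (du₂ x), pd_sub ((dm₁ x).fun_mul (dpu₁ i x)) ((dm₂ x).fun_mul (dpu₂ i x))]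
  have hhj : g (m₁ x) - g (m₂ x)
      = ε * (u₁ x - u₂ x) + (1 / 2) * (gradSq d u₁ x - gradSq d u₂ x) := by
    linarith [h1.hj x, h2.hj x]
  have hfp : divUp d m₁ u₁ x - divUp d m₂ u₂ x = ε * (m₁ x - m₂ x) := by
    linarith [h1.fp x, h2.fp x]
  simp only [divUp, gradSq] at hhj hfp
  have hsplit : ∀ i, (pd d i u₁ x - pd d i u₂ x) * (m₁ x * pd d i u₁ x - m₂ x * pd d i u₂ x)
      = (1 / 2) * (m₁ x - m₂ x) * (pd d i u₁ x ^ 2 - pd d i u₂ x ^ 2)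
        + (1 / 2) * (m₁ x + m₂ x) * (pd d i u₁ x - pd d i u₂ x) ^ 2 := fun i => by ring
  rw [lasryLionsIntegrand, Finset.sum_congr rfl fun i _ => hprod i, Finset.sum_add_distrib,
    ← Finset.mul_sum, Finset.sum_sub_distrib, hfp, hhj, Finset.sum_congr rfl fun i _ => hsplit i,
    Finset.sum_add_distrib, ← Finset.mul_sum, ← Finset.mul_sum, Finset.sum_sub_distrib]
  ring

lemma integral_lasryLionsIntegrand_eq_zero (h1 : DiscSol d α g V ε u₁ m₁)
    (h2 : DiscSol d α g V ε u₂ m₂) :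
    ∫ x in Icc 0 1, lasryLionsIntegrand d g u₁ m₁ u₂ m₂ x = 0 := by
  set flux : Fin d → (Fin d → ℝ) → ℝ :=
    fun i y => (u₁ y - u₂ y) * (m₁ y * pd d i u₁ y - m₂ y * pd d i u₂ y)
  have hflux_smooth (i : Fin d) : ContDiff ℝ 1 (flux i) :=
    ((h1.reg_u.1.of_le one_le_two).sub (h2.reg_u.1.of_le one_le_two)).mul
      ((h1.reg_m.1.mul (contDiff_pd h1.reg_u.1 i)).sub
        (h2.reg_m.1.mul (contDiff_pd h2.reg_u.1 i)))
  have hflux_per (i : Fin d) : ZPer d (flux i) := fun x k => by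
    simp only [flux, h1.per_u x k, h2.per_u x k, h1.per_m x k, h2.per_m x k,
      (h1.per_u.pd i) x k, (h2.per_u.pd i) x k]
  rw [setIntegral_congr_fun measurableSet_Icc fun x _ => h1.lasryLionsIntegrand_eq_sum_pd h2 x,
    integral_finsetSum _ fun i _ => (continuous_pd (hflux_smooth i) i).integrableOn_Icc]
  exact Finset.sum_eq_zero fun i _ => (hflux_per i).integral_pd_eq_zero (hflux_smooth i) i

lemma m_eq (hmono : StrictMonoOn g (Ici 0)) (hcont : ContinuousOn g (Ici 0))
    (h1 : DiscSol d α g V ε u₁ m₁) (h2 : DiscSol d α g V ε u₂ m₂) : m₁ = m₂ := by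
  have hper : ZPer d (lasryLionsIntegrand d g u₁ m₁ u₂ m₂) := fun x k => by
    simp only [lasryLionsIntegrand, h1.per_m x k, h2.per_m x k, (h1.per_u.pd _) x k,
      (h2.per_u.pd _) x k]
  have hcont_integrand : Continuous (lasryLionsIntegrand d g u₁ m₁ u₂ m₂) := by
    have cm₁ := h1.reg_m.1.continuous
    have cm₂ := h2.reg_m.1.continuous
    have cgm₁ := hcont.comp_continuous cm₁ h1.m_nonneg
    have cgm₂ := hcont.comp_continuous cm₂ h2.m_nonneg
    have cDu i := (continuous_pd (h1.reg_u.1.of_le one_le_two) i).sub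
      (continuous_pd (h2.reg_u.1.of_le one_le_two) i)
    exact ((cm₁.sub cm₂).mul (cgm₁.sub cgm₂)).add ((continuous_const.mul (cm₁.add cm₂)).mul
      (continuous_finsetSum _ fun i _ => (cDu i).pow 2))
  have hterm_nonneg (x : Fin d → ℝ) : 0 ≤ (m₁ x - m₂ x) * (g (m₁ x) - g (m₂ x)) :=
    hmono.monotoneOn.sub_mul_sub_nonneg (h1.m_nonneg x) (h2.m_nonneg x)
  have hle (x : Fin d → ℝ) := sub_mul_sub_le_lasryLionsIntegrand (g := g) (u₁ := u₁) (u₂ := u₂)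
    (h1.m_nonneg x) (h2.m_nonneg x)
  have hzero := hper.eq_zero_of_integral_eq_zero hcont_integrand
    (fun x => (hterm_nonneg x).trans (hle x)) (h1.integral_lasryLionsIntegrand_eq_zero h2)
  funext x
  refine hmono.eq_of_sub_mul_sub_eq_zero (h1.m_nonneg x) (h2.m_nonneg x) ?_
  exact le_antisymm ((hle x).trans (congrFun hzero x).le) (hterm_nonneg x)

lemma u_le {m : (Fin d → ℝ) → ℝ} (hε : ε ≠ 0) (h1 : DiscSol d α g V ε u₁ m)
    (h2 : DiscSol d α g V ε u₂ m) :
    u₁ ≤ u₂ := by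
  have du₁ := h1.reg_u.1.differentiable two_ne_zero
  have du₂ := h2.reg_u.1.differentiable two_ne_zero
  have hper : ZPer d fun y => u₁ y - u₂ y := fun x k => by
    simp only [h1.per_u x k, h2.per_u x k]
  obtain ⟨x₀, hx₀⟩ := hper.exists_forall_le (du₁.continuous.sub du₂.continuous)
  have hcrit : fderiv ℝ (fun y => u₁ y - u₂ y) x₀ = 0 :=
    IsLocalMax.fderiv_eq_zero (.of_forall hx₀)
  have hgrad : gradSq d u₁ x₀ = gradSq d u₂ x₀ := by
    refine Finset.sum_congr rfl fun i _ => ?_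
    have hpd := pd_sub (du₁ x₀) (du₂ x₀) i
    rw [pd, hcrit] at hpd
    rw [sub_eq_zero.1 hpd.symm]
  have hεw : ε * (u₁ x₀ - u₂ x₀) = 0 := by linarith [h1.hj x₀, h2.hj x₀]
  have hw : u₁ x₀ - u₂ x₀ = 0 := (mul_eq_zero.1 hεw).resolve_left hε
  exact fun x => sub_nonpos.1 (hw ▸ hx₀ x)

end DiscSol

theorem stmt8_general (d : ℕ) (α : ℝ)
    (g : ℝ → ℝ) (V : (Fin d → ℝ) → ℝ) (hg : Ghyp α g)
    (ε : ℝ) (hε : 0 < ε) (u₁ m₁ u₂ m₂ : (Fin d → ℝ) → ℝ)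
    (h1 : DiscSol d α g V ε u₁ m₁) (h2 : DiscSol d α g V ε u₂ m₂) :
    u₁ = u₂ ∧ m₁ = m₂ := by
  obtain rfl : m₁ = m₂ := DiscSol.m_eq hg.1 hg.2.1 h1 h2
  exact ⟨le_antisymm (h1.u_le hε.ne' h2) (h2.u_le hε.ne' h1), rfl⟩

theorem stmt8 (d : ℕ) (α : ℝ) (hα0 : 0 < α) (hα1 : α < 1)
    (g : ℝ → ℝ) (V : (Fin d → ℝ) → ℝ) (hg : Ghyp α g) (hV : Vhyp d α V)
    (ε : ℝ) (hε : 0 < ε) (u₁ m₁ u₂ m₂ : (Fin d → ℝ) → ℝ)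
    (h1 : DiscSol d α g V ε u₁ m₁) (h2 : DiscSol d α g V ε u₂ m₂) :
    u₁ = u₂ ∧ m₁ = m₂ :=
  stmt8_general d α g V hg ε hε u₁ m₁ u₂ m₂ h1 h2
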